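/- Let α be a t×t matrix, β a t×m matrix and γ an m×t matrix such that the pair (γ, α) is observable and the pair (α, β) is controllable. If λ is an eigenvalue of α, then the function z ↦ γ(zI − α)⁻¹β is unbounded near λ: for every ε > 0 and every M > 0 there exists z ∈ ℂ with 0 < |z − λ| < ε, zI − α invertible, and ‖γ(zI − α)⁻¹β‖ > M. (In particular, every eigenvalue of the state matrix of a minimal realization is a pole of the associated rational matrix function.) -/

import Mathlib

open Matrix
open scoped Matrix.Norms.L2Operator

/-- The pair `(γ, α)` is observable: the intersection of the kernels of `γαᵏ`,
`k = 0, …, t-1`, is trivial. -/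
def Observable {m t : ℕ} (γ : Matrix (Fin m) (Fin t) ℂ) (α : Matrix (Fin t) (Fin t) ℂ) :
    Prop :=
  ∀ x : Fin t → ℂ, (∀ k : ℕ, k < t → (γ * α ^ k) *ᵥ x = 0) → x = 0

/-- The pair `(α, β)` is controllable: the columns of `β, αβ, …, α^{t-1}β` span `ℂᵗ`. -/
def Controllable {m t : ℕ} (α : Matrix (Fin t) (Fin t) ℂ) (β : Matrix (Fin t) (Fin m) ℂ) :
    Prop :=
  Submodule.span ℂ
    {v : Fin t → ℂ | ∃ k : ℕ, k < t ∧ ∃ j : Fin m, v = fun i => (α ^ k * β) i j} = ⊤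

namespace Stmt14Aux

open Polynomial Finset Filter

lemma charpoly_eval_eq {t : ℕ} (α : Matrix (Fin t) (Fin t) ℂ) (z : ℂ) :
    α.charpoly.eval z = (z • (1 : Matrix (Fin t) (Fin t) ℂ) - α).det := by
  rw [Matrix.charpoly, eval_det, matPolyEquiv_charmatrix]
  congr 1
  rw [eval_sub, eval_X, eval_C, Matrix.scalar_apply, Matrix.smul_eq_diagonal_mul]
  simp [Matrix.diagonal_mul_diagonal]

lemma pow_mulVec_eig {t : ℕ} {α : Matrix (Fin t) (Fin t) ℂ} {lam : ℂ} {w : Fin t → ℂ}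
    (hw : α *ᵥ w = lam • w) (k : ℕ) : (α ^ k) *ᵥ w = lam ^ k • w := by
  induction k with
  | zero => simp
  | succ n ih =>
      rw [pow_succ, ← Matrix.mulVec_mulVec, hw, Matrix.mulVec_smul, ih, smul_smul, pow_succ,
        mul_comm]

lemma aeval_mulVec_eig {t : ℕ} {α : Matrix (Fin t) (Fin t) ℂ} {lam : ℂ} {w : Fin t → ℂ}
    (hw : α *ᵥ w = lam • w) (p : ℂ[X]) : (aeval α p) *ᵥ w = p.eval lam • w := by
  induction p using Polynomial.induction_on' with
  | add p q hp hq => rw [map_add, Matrix.add_mulVec, hp, hq, eval_add, add_smul]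
  | monomial n a =>
      rw [aeval_monomial, eval_monomial, ← Matrix.mulVec_mulVec, pow_mulVec_eig hw,
        Matrix.mulVec_smul, Algebra.algebraMap_eq_smul_one, Matrix.smul_mulVec,
        Matrix.one_mulVec, smul_smul, mul_comm]

lemma exists_proj {t : ℕ} (α : Matrix (Fin t) (Fin t) ℂ) (lam : ℂ)
    (hlam : lam ∈ spectrum ℂ α) :
    ∃ (a : ℕ) (P : Matrix (Fin t) (Fin t) ℂ) (w : Fin t → ℂ),
      0 < a ∧ a = α.charpoly.rootMultiplicity lam ∧
      (α - lam • 1) ^ a * P = 0 ∧ P * P = P ∧ Commute α P ∧ w ≠ 0 ∧ P *ᵥ w = w ∧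
      (∀ x, α *ᵥ x = lam • x → P *ᵥ x = x) := by
  classical
  set χ := α.charpoly with hχdef
  have hχ0 : χ ≠ 0 := α.charpoly_monic.ne_zero
  have hdet0 : (lam • (1 : Matrix (Fin t) (Fin t) ℂ) - α).det = 0 := by
    have h1 := spectrum.mem_iff.mp hlam
    rw [Algebra.algebraMap_eq_smul_one] at h1
    by_contra hne
    exact h1 ((Matrix.isUnit_iff_isUnit_det _).mpr (isUnit_iff_ne_zero.mpr hne))
  have hroot : χ.eval lam = 0 := by rw [hχdef, charpoly_eval_eq]; exact hdet0
  obtain ⟨w, hw0, hweq⟩ := (Matrix.exists_mulVec_eq_zero_iff).mpr hdet0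
  have hweig : α *ᵥ w = lam • w := by
    rw [Matrix.sub_mulVec, sub_eq_zero] at hweq
    rw [← hweq, Matrix.smul_mulVec, Matrix.one_mulVec]
  set a := χ.rootMultiplicity lam with hadef
  have ha : 0 < a := (Polynomial.rootMultiplicity_pos hχ0).mpr hroot
  set q : ℂ[X] := χ /ₘ (X - C lam) ^ a with hqdef
  have hfac : (X - C lam) ^ a * q = χ :=
    Polynomial.pow_mul_divByMonic_rootMultiplicity_eq χ lam
  have hqlam : q.eval lam ≠ 0 :=
    Polynomial.eval_divByMonic_pow_rootMultiplicity_ne_zero lam hχ0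
  have hcop : IsCoprime ((X - C lam) ^ a) q := by
    have hirr : Irreducible (X - C lam) := Polynomial.irreducible_X_sub_C lam
    have hnd : ¬ (X - C lam) ∣ q := by
      intro hdvd
      exact hqlam ((Polynomial.dvd_iff_isRoot).mp hdvd)
    exact ((hirr.coprime_iff_not_dvd).mpr hnd).pow_left
  obtain ⟨u, v, huv⟩ := hcop
  set P := aeval α (v * q) with hPdef
  have haevalN : aeval α (X - C lam) = α - lam • 1 := by
    rw [map_sub, aeval_X, aeval_C, Algebra.algebraMap_eq_smul_one]
  have heval1 : (v * q).eval lam = 1 := by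
    have h2 := congrArg (Polynomial.eval lam) huv
    simpa [eval_add, eval_mul, eval_pow, eval_sub, eval_X, eval_C, sub_self,
      zero_pow ha.ne'] using h2
  have hNP : (α - lam • 1) ^ a * P = 0 := by
    have h3 : (α - lam • 1) ^ a * P = aeval α (v * χ) := by
      rw [← haevalN, ← map_pow, hPdef, ← _root_.map_mul]
      refine congrArg (aeval α) ?_
      rw [← hfac]; ring
    rw [h3, _root_.map_mul, hχdef, Matrix.aeval_self_charpoly, mul_zero]
  have hPP : P * P = P := by
    have hpoly : (v * q) * (v * q) = v * q - (v * u) * χ := by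
      rw [← hfac]; linear_combination (v * q) * huv
    have hz : aeval α (v * u * χ) = 0 := by
      rw [hχdef, _root_.map_mul (aeval α) (v * u) α.charpoly,
        Matrix.aeval_self_charpoly, mul_zero]
    rw [hPdef, ← _root_.map_mul, hpoly, map_sub, hz, sub_zero]
  have hPα : Commute α P := by
    rw [hPdef]
    induction (v * q) using Polynomial.induction_on' with
    | add p r hp hr => rw [map_add]; exact hp.add_right hr
    | monomial n b =>
        rw [aeval_monomial]
        have h1 : Commute α ((algebraMap ℂ (Matrix (Fin t) (Fin t) ℂ)) b) :=
          (Algebra.commutes b α).symm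
        exact h1.mul_right ((Commute.refl α).pow_right n)
  have hPx : ∀ x, α *ᵥ x = lam • x → P *ᵥ x = x := by
    intro x hx
    rw [hPdef, aeval_mulVec_eig hx, heval1, one_smul]
  exact ⟨a, P, w, ha, rfl, hNP, hPP, hPα, hw0, hPx w hweig, hPx⟩

lemma pow_expand {t : ℕ} (α : Matrix (Fin t) (Fin t) ℂ) (lam : ℂ) (j : ℕ) :
    α ^ j = ∑ k ∈ Finset.range (j + 1),
      (lam ^ (j - k) * (j.choose k : ℂ)) • ((α - lam • 1) ^ k) := by
  have hcomm : Commute (α - lam • (1 : Matrix (Fin t) (Fin t) ℂ)) (lam • 1) :=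
    Commute.smul_right (Commute.one_right _) lam
  have h0 : α = (α - lam • 1) + lam • 1 := by abel
  calc α ^ j = ((α - lam • 1) + lam • 1) ^ j := by rw [← h0]
    _ = _ := by
        rw [hcomm.add_pow]
        refine Finset.sum_congr rfl fun k hk => ?_
        rw [_root_.smul_pow, one_pow]
        rw [mul_smul_comm, smul_mul_assoc, mul_one]
        rw [show ((j.choose k : ℕ) : Matrix (Fin t) (Fin t) ℂ) = ((j.choose k : ℂ)) • 1 by
          rw [Nat.cast_smul_eq_nsmul ℂ (j.choose k) (1 : Matrix (Fin t) (Fin t) ℂ),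
            nsmul_eq_mul, mul_one]]
        rw [mul_smul_comm, mul_one, smul_smul, mul_comm]

lemma key_nonzero {m t : ℕ} (α : Matrix (Fin t) (Fin t) ℂ) (β : Matrix (Fin t) (Fin m) ℂ)
    (γ : Matrix (Fin m) (Fin t) ℂ) (hObs : Observable γ α) (hCon : Controllable α β)
    (lam : ℂ) (P : Matrix (Fin t) (Fin t) ℂ) (hPα : Commute α P)
    (w : Fin t → ℂ) (hw : w ≠ 0) (hPw : P *ᵥ w = w) :
    ∃ k, γ * ((α - lam • 1) ^ k * P) * β ≠ 0 := by
  by_contra H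
  push_neg at H
  have hA : ∀ j : ℕ, γ * (α ^ j * P) * β = 0 := by
    intro j
    have : γ * (α ^ j * P) * β = ∑ k ∈ Finset.range (j + 1),
        (lam ^ (j - k) * (j.choose k : ℂ)) • (γ * ((α - lam • 1) ^ k * P) * β) := by
      rw [pow_expand α lam j, Finset.sum_mul, Matrix.mul_sum, Matrix.sum_mul]
      refine Finset.sum_congr rfl fun k _ => ?_
      rw [Matrix.smul_mul, Matrix.mul_smul, Matrix.smul_mul]
    rw [this]
    exact Finset.sum_eq_zero fun k _ => by rw [H k, smul_zero]
  have hB : ∀ i k : ℕ, (γ * (α ^ i * P)) * (α ^ k * β) = 0 := by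
    intro i k
    have h1 : P * α ^ k = α ^ k * P := (hPα.symm.pow_right k).eq
    calc (γ * (α ^ i * P)) * (α ^ k * β)
        = γ * (α ^ i * ((P * α ^ k) * β)) := by simp only [Matrix.mul_assoc]
      _ = γ * (α ^ (i + k) * P) * β := by
          rw [h1, pow_add]; simp only [Matrix.mul_assoc]
      _ = 0 := hA (i + k)
  have hC : ∀ i : ℕ, γ * (α ^ i * P) = 0 := by
    intro i
    have hker : ∀ x : Fin t → ℂ, (γ * (α ^ i * P)) *ᵥ x = 0 := by
      intro x
      have hx : x ∈ Submodule.span ℂ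
          {v : Fin t → ℂ | ∃ k : ℕ, k < t ∧ ∃ j : Fin m, v = fun i => (α ^ k * β) i j} := by
        rw [hCon]; trivial
      refine Submodule.span_induction ?_ ?_ ?_ ?_ hx
      · rintro v ⟨k, hk, j, rfl⟩
        have hv : (fun i => (α ^ k * β) i j) = (α ^ k * β) *ᵥ Pi.single j 1 := by
          ext i; simp [Matrix.mulVec_single]
        rw [hv, Matrix.mulVec_mulVec, hB i k, Matrix.zero_mulVec]
      · simp
      · intro u v _ _ hu hv; rw [Matrix.mulVec_add, hu, hv, add_zero]
      · intro c u _ hu; rw [Matrix.mulVec_smul, hu, smul_zero]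
    ext r j
    have := congrFun (hker (Pi.single j 1)) r
    simpa [Matrix.mulVec_single] using this
  have hD : P *ᵥ w = 0 := by
    refine hObs (P *ᵥ w) fun k _ => ?_
    rw [Matrix.mulVec_mulVec, Matrix.mul_assoc, hC k, Matrix.zero_mulVec]
  exact hw (by rw [← hPw, hD])

lemma root_isolation (χ : ℂ[X]) (hχ0 : χ ≠ 0) (lam : ℂ) :
    ∃ δ > (0:ℝ), ∀ z : ℂ, z ≠ lam → ‖z - lam‖ < δ → χ.eval z ≠ 0 := by
  classical
  set s : Finset ℂ := χ.roots.toFinset.erase lam with hs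
  by_cases hne : s.Nonempty
  · refine ⟨s.inf' hne (fun μ => ‖μ - lam‖), ?_, ?_⟩
    · rw [gt_iff_lt, Finset.lt_inf'_iff]
      intro μ hμ
      have : μ ≠ lam := Finset.ne_of_mem_erase hμ
      simpa [norm_pos_iff, sub_ne_zero] using this
    · intro z hzlam hzδ h0
      have hz : z ∈ s := by
        rw [hs, Finset.mem_erase]
        exact ⟨hzlam, by rw [Multiset.mem_toFinset, Polynomial.mem_roots hχ0]; exact h0⟩
      exact absurd hzδ (not_lt.mpr (Finset.inf'_le _ hz))
  · refine ⟨1, one_pos, fun z hzlam _ h0 => ?_⟩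
    refine hne ⟨z, ?_⟩
    rw [hs, Finset.mem_erase]
    exact ⟨hzlam, by rw [Multiset.mem_toFinset, Polynomial.mem_roots hχ0]; exact h0⟩

lemma resolvent_sum_aux {t : ℕ} (A P : Matrix (Fin t) (Fin t) ℂ) {c : ℂ} (hc : c ≠ 0) :
    ∀ n : ℕ, (c • (1 : Matrix (Fin t) (Fin t) ℂ) - A) *
      (∑ k ∈ Finset.range n, (c⁻¹) ^ (k + 1) • (A ^ k * P)) = P - (c⁻¹) ^ n • (A ^ n * P) := by
  intro n
  induction n with
  | zero => simp
  | succ n ih =>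
      rw [Finset.sum_range_succ, mul_add, ih, Matrix.mul_smul, sub_mul, smul_mul_assoc,
        one_mul, smul_sub, smul_smul]
      have h1 : c⁻¹ ^ (n + 1) * c = c⁻¹ ^ n := by
        rw [pow_succ, mul_assoc]
        field_simp
      have h2 : A * (A ^ n * P) = A ^ (n+1) * P := by rw [pow_succ', mul_assoc]
      rw [h1, h2]
      abel

lemma resolvent_sum {t : ℕ} (A P : Matrix (Fin t) (Fin t) ℂ) {c : ℂ} (hc : c ≠ 0)
    {a : ℕ} (hAP : A ^ a * P = 0) :
    (c • (1 : Matrix (Fin t) (Fin t) ℂ) - A) *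
      (∑ k ∈ Finset.range a, (c⁻¹) ^ (k + 1) • (A ^ k * P)) = P := by
  rw [resolvent_sum_aux A P hc a, hAP, smul_zero, sub_zero]

lemma decomp {m t : ℕ} (α P : Matrix (Fin t) (Fin t) ℂ)
    (γ : Matrix (Fin m) (Fin t) ℂ) (β : Matrix (Fin t) (Fin m) ℂ) (lam z : ℂ) (a : ℕ)
    (hNP : (α - lam • 1) ^ a * P = 0) (hPP : P * P = P) (hPα : Commute α P)
    (hzdet : IsUnit (z • (1 : Matrix (Fin t) (Fin t) ℂ) - α).det) (hzlam : z ≠ lam)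
    (hWdet : ((z • (1 : Matrix (Fin t) (Fin t) ℂ) - α) * (1 - P) + P).det ≠ 0) :
    γ * (z • (1 : Matrix (Fin t) (Fin t) ℂ) - α)⁻¹ * β =
      (∑ k ∈ Finset.range a,
        ((z - lam)⁻¹) ^ (k + 1) • (γ * ((α - lam • 1) ^ k * P) * β))
      + γ * ((1 - P) * ((z • (1 : Matrix (Fin t) (Fin t) ℂ) - α) * (1 - P) + P)⁻¹) * β := by
  set N : Matrix (Fin t) (Fin t) ℂ := α - lam • 1 with hN
  set Q : Matrix (Fin t) (Fin t) ℂ := 1 - P with hQ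
  set Z : Matrix (Fin t) (Fin t) ℂ := z • 1 - α with hZ
  set W : Matrix (Fin t) (Fin t) ℂ := Z * Q + P with hWd
  have hc : z - lam ≠ 0 := sub_ne_zero.mpr hzlam
  have hWunit : IsUnit W.det := isUnit_iff_ne_zero.mpr hWdet
  have hz1 : Z = (z - lam) • (1 : Matrix (Fin t) (Fin t) ℂ) - N := by
    rw [hZ, hN, sub_smul]; abel
  set S : Matrix (Fin t) (Fin t) ℂ :=
    ∑ k ∈ Finset.range a, ((z - lam)⁻¹) ^ (k + 1) • (N ^ k * P) with hSd
  have hS : Z * S = P := by rw [hz1]; exact resolvent_sum N P hc hNP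
  have hresP : Z⁻¹ * P = S := by
    have h2 : Z⁻¹ * (Z * S) = Z⁻¹ * P := by rw [hS]
    rw [← Matrix.mul_assoc, Matrix.nonsing_inv_mul _ hzdet, Matrix.one_mul] at h2
    exact h2.symm
  have hZP : Commute Z P := by
    rw [hZ]
    exact ((Commute.one_left P).smul_left z).sub_left hPα
  have hPQ : P * Q = 0 := by rw [hQ, mul_sub, mul_one, hPP, sub_self]
  have hPW : P * W = P := by
    rw [hWd, mul_add, hPP, ← Matrix.mul_assoc, hZP.symm.eq, Matrix.mul_assoc, hPQ,
      mul_zero, zero_add]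
  have hPWinv : P * W⁻¹ = P := by
    have h5 : P * W * W⁻¹ = P * W⁻¹ := by rw [hPW]
    rw [Matrix.mul_assoc, Matrix.mul_nonsing_inv _ hWunit, mul_one] at h5
    exact h5.symm
  have hresQ : Z⁻¹ * Q = Q * W⁻¹ := by
    have h6 : Z * (Q * W⁻¹) = Q := by
      rw [← Matrix.mul_assoc]
      have h7 : Z * Q = W - P := by rw [hWd]; abel
      rw [h7, sub_mul, Matrix.mul_nonsing_inv _ hWunit, hPWinv, hQ]
    have h8 : Z⁻¹ * (Z * (Q * W⁻¹)) = Z⁻¹ * Q := by rw [h6]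
    rw [← Matrix.mul_assoc, Matrix.nonsing_inv_mul _ hzdet, Matrix.one_mul] at h8
    exact h8.symm
  have hPQ1 : P + Q = 1 := by rw [hQ]; abel
  calc γ * Z⁻¹ * β = γ * (Z⁻¹ * (P + Q)) * β := by rw [hPQ1, mul_one]
    _ = γ * (S + Q * W⁻¹) * β := by rw [mul_add, hresP, hresQ]
    _ = γ * S * β + γ * (Q * W⁻¹) * β := by
        rw [Matrix.mul_add, Matrix.add_mul]
    _ = _ := by
        congr 1
        rw [hSd, Matrix.mul_sum, Matrix.sum_mul]
        refine Finset.sum_congr rfl fun k _ => ?_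
        rw [Matrix.mul_smul, Matrix.smul_mul]

lemma Wlam_det_ne {t : ℕ} (α P : Matrix (Fin t) (Fin t) ℂ) (lam : ℂ)
    (hPP : P * P = P) (hPα : Commute α P)
    (hPx : ∀ x, α *ᵥ x = lam • x → P *ᵥ x = x) :
    ((lam • (1 : Matrix (Fin t) (Fin t) ℂ) - α) * (1 - P) + P).det ≠ 0 := by
  intro h0
  obtain ⟨x, hx0, hxW⟩ := (Matrix.exists_mulVec_eq_zero_iff).mpr h0
  set Q : Matrix (Fin t) (Fin t) ℂ := 1 - P with hQ
  set Z : Matrix (Fin t) (Fin t) ℂ := lam • 1 - α with hZ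
  set W : Matrix (Fin t) (Fin t) ℂ := Z * Q + P with hWd
  have hZP : Commute Z P := by
    rw [hZ]
    exact ((Commute.one_left P).smul_left lam).sub_left hPα
  have hPQ : P * Q = 0 := by rw [hQ, mul_sub, mul_one, hPP, sub_self]
  have hPW : P * W = P := by
    rw [hWd, mul_add, hPP, ← Matrix.mul_assoc, hZP.symm.eq, Matrix.mul_assoc, hPQ,
      mul_zero, zero_add]
  have hPx0 : P *ᵥ x = 0 := by
    have h1 : P *ᵥ (W *ᵥ x) = (P * W) *ᵥ x := Matrix.mulVec_mulVec x P W
    rw [hxW, Matrix.mulVec_zero, hPW] at h1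
    exact h1.symm
  have hQx : Q *ᵥ x = x := by
    rw [hQ, Matrix.sub_mulVec, Matrix.one_mulVec, hPx0, sub_zero]
  have hZx : Z *ᵥ x = 0 := by
    have h2 : W *ᵥ x = (Z * Q) *ᵥ x + P *ᵥ x := Matrix.add_mulVec _ _ x
    rw [hxW, hPx0, add_zero, ← Matrix.mulVec_mulVec, hQx] at h2
    exact h2.symm
  have heig : α *ᵥ x = lam • x := by
    rw [hZ, Matrix.sub_mulVec, sub_eq_zero] at hZx
    rw [← hZx, Matrix.smul_mulVec, Matrix.one_mulVec]
  have := hPx x heig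
  rw [hPx0] at this
  exact hx0 this.symm

lemma bounded_aux {m t : ℕ} (α Q P : Matrix (Fin t) (Fin t) ℂ)
    (γ : Matrix (Fin m) (Fin t) ℂ) (β : Matrix (Fin t) (Fin m) ℂ) (lam : ℂ)
    (hdet : ((lam • 1 - α) * Q + P).det ≠ 0) :
    ∃ δ > (0:ℝ), ∃ B > (0:ℝ), ∀ z : ℂ, ‖z - lam‖ < δ →
      ((z • 1 - α) * Q + P).det ≠ 0 ∧
      ‖γ * (Q * ((z • 1 - α) * Q + P)⁻¹) * β‖ ≤ B := by
  set W : ℂ → Matrix (Fin t) (Fin t) ℂ := fun z => (z • 1 - α) * Q + P with hW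
  set g : ℂ → Matrix (Fin m) (Fin m) ℂ := fun z => γ * (Q * (W z)⁻¹) * β with hg
  have hWcont : Continuous W := by
    apply Continuous.add _ continuous_const
    apply Continuous.matrix_mul _ continuous_const
    exact (continuous_id.smul continuous_const).sub continuous_const
  have hinv : ContinuousAt (fun z => (W z)⁻¹) lam := by
    refine ContinuousAt.comp ?_ hWcont.continuousAt
    refine continuousAt_matrix_inv _ ?_
    rw [Ring.inverse_eq_inv']
    exact continuousAt_inv₀ hdet
  have hgc : ContinuousAt g lam := by
    have h1 : Continuous (fun X : Matrix (Fin t) (Fin t) ℂ => γ * (Q * X) * β) :=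
      (continuous_const.matrix_mul (continuous_const.matrix_mul continuous_id)).matrix_mul
        continuous_const
    exact h1.continuousAt.comp hinv
  have hev1 : ∀ᶠ z in nhds lam, (W z).det ≠ 0 :=
    (hWcont.matrix_det.continuousAt).eventually_ne hdet
  have hev2 : ∀ᶠ z in nhds lam, ‖g z‖ < ‖g lam‖ + 1 :=
    hgc.norm.eventually (eventually_of_mem (Iio_mem_nhds (lt_add_one _)) (fun y hy => hy))
  obtain ⟨δ, hδ, hball⟩ := Metric.eventually_nhds_iff.mp (hev1.and hev2)
  refine ⟨δ, hδ, ‖g lam‖ + 1, by positivity, fun z hz => ?_⟩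
  have := hball (show dist z lam < δ by rwa [Complex.dist_eq])
  exact ⟨this.1, le_of_lt this.2⟩

end Stmt14Aux

set_option maxHeartbeats 1000000 in
open Stmt14Aux Polynomial Finset in
/-- for a minimal (observable and controllable) realization, every
eigenvalue of `α` is a pole of `z ↦ γ(zI - α)⁻¹β`: the function is unbounded (in the
operator norm on `m×m` matrices) near each eigenvalue. -/
theorem stmt_14 (m t : ℕ) (hm : 0 < m) (ht : 0 < t)
    (α : Matrix (Fin t) (Fin t) ℂ) (β : Matrix (Fin t) (Fin m) ℂ)
    (γ : Matrix (Fin m) (Fin t) ℂ)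
    (hObs : Observable γ α) (hCon : Controllable α β)
    (lam : ℂ) (hlam : lam ∈ spectrum ℂ α) :
    ∀ ε > (0 : ℝ), ∀ M > (0 : ℝ), ∃ z : ℂ,
      0 < ‖z - lam‖ ∧ ‖z - lam‖ < ε ∧
      IsUnit (z • (1 : Matrix (Fin t) (Fin t) ℂ) - α) ∧
      M < ‖γ * (z • (1 : Matrix (Fin t) (Fin t) ℂ) - α)⁻¹ * β‖ := by
  classical
  intro ε hε M hM
  obtain ⟨a, P, w, ha, hamult, hNP, hPP, hPα, hw0, hPw, hPx⟩ := exists_proj α lam hlam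
  obtain ⟨δ₂, hδ₂pos, hδ₂⟩ := root_isolation α.charpoly α.charpoly_monic.ne_zero lam
  have hWlam := Wlam_det_ne α P lam hPP hPα hPx
  obtain ⟨δ₁, hδ₁pos, B, hBpos, hδ₁⟩ := bounded_aux α (1 - P) P γ β lam hWlam
  obtain ⟨k₀, hk₀⟩ := key_nonzero α β γ hObs hCon lam P hPα w hw0 hPw
  set Cmat : ℕ → Matrix (Fin m) (Fin m) ℂ :=
    fun k => γ * ((α - lam • 1) ^ k * P) * β with hCmat
  have hCbig : ∀ k, a ≤ k → Cmat k = 0 := by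
    intro k hk
    have hsplit : (α - lam • 1) ^ k * P = 0 := by
      have h1 : (α - lam • 1) ^ k = (α - lam • 1) ^ (k - a) * (α - lam • 1) ^ a := by
        rw [← pow_add]; congr 1; omega
      rw [h1, Matrix.mul_assoc, hNP, mul_zero]
    rw [hCmat]
    simp only
    rw [hsplit, Matrix.mul_zero, Matrix.zero_mul]
  have hk₀a : k₀ < a := by
    by_contra h
    exact hk₀ (hCbig k₀ (le_of_not_gt h))
  set s : Finset ℕ := (Finset.range a).filter (fun k => Cmat k ≠ 0) with hsdef
  have hsne : s.Nonempty :=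
    ⟨k₀, by rw [hsdef, Finset.mem_filter, Finset.mem_range]; exact ⟨hk₀a, hk₀⟩⟩
  set d := s.max' hsne with hddef
  have hd_mem := s.max'_mem hsne
  have hdC : Cmat d ≠ 0 := (Finset.mem_filter.mp hd_mem).2
  have hda : d < a := Finset.mem_range.mp (Finset.mem_filter.mp hd_mem).1
  have hdmax : ∀ k, d < k → Cmat k = 0 := by
    intro k hk
    by_cases hka : k < a
    · by_contra hC
      have hkm : k ∈ s := Finset.mem_filter.mpr ⟨Finset.mem_range.mpr hka, hC⟩
      exact absurd (Finset.le_max' s k hkm) (not_le.mpr hk)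
    · exact hCbig k (le_of_not_gt hka)
  set CD := ‖Cmat d‖ with hCDdef
  have hCD : 0 < CD := by rw [hCDdef]; exact norm_pos_iff.mpr hdC
  set T := ∑ k ∈ Finset.range d, ‖Cmat k‖ with hTdef
  have hT : 0 ≤ T := Finset.sum_nonneg fun _ _ => norm_nonneg _
  set mm := min (min ε δ₁) (min δ₂ (min 1 (CD / (T + M + B + 1)))) with hmm
  have hmm0 : 0 < mm := by
    rw [hmm]
    refine lt_min (lt_min hε hδ₁pos) (lt_min hδ₂pos (lt_min one_pos ?_))
    exact div_pos hCD (by linarith)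
  set r := mm / 2 with hrdef
  have hr0 : 0 < r := by rw [hrdef]; linarith
  have hmme : mm ≤ ε := (min_le_left _ _).trans (min_le_left _ _)
  have hmmδ₁ : mm ≤ δ₁ := (min_le_left _ _).trans (min_le_right _ _)
  have hmmδ₂ : mm ≤ δ₂ := (min_le_right _ _).trans (min_le_left _ _)
  have hmm1 : mm ≤ 1 := ((min_le_right _ _).trans (min_le_right _ _)).trans (min_le_left _ _)
  have hmmCD : mm ≤ CD / (T + M + B + 1) :=
    ((min_le_right _ _).trans (min_le_right _ _)).trans (min_le_right _ _)
  have hrε : r < ε := by rw [hrdef]; linarith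
  have hrδ₁ : r < δ₁ := by rw [hrdef]; linarith
  have hrδ₂ : r < δ₂ := by rw [hrdef]; linarith
  have hr1 : r ≤ 1 := by rw [hrdef]; linarith
  have hrCD : r < CD / (T + M + B + 1) := by
    have hpos : 0 < CD / (T + M + B + 1) := div_pos hCD (by linarith)
    rw [hrdef]; linarith
  set z := lam + (r : ℂ) with hzdef
  have hzl : z - lam = (r : ℂ) := by rw [hzdef]; ring
  have hznorm : ‖z - lam‖ = r := by
    rw [hzl, Complex.norm_real, Real.norm_eq_abs, abs_of_pos hr0]
  have hzne : z ≠ lam := by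
    intro h
    rw [h, sub_self] at hzl
    exact hr0.ne (by exact_mod_cast hzl)
  have hdetz : (z • (1 : Matrix (Fin t) (Fin t) ℂ) - α).det ≠ 0 := by
    have := hδ₂ z hzne (by rw [hznorm]; exact hrδ₂)
    rwa [charpoly_eval_eq] at this
  have hzunit : IsUnit (z • (1 : Matrix (Fin t) (Fin t) ℂ) - α) :=
    (Matrix.isUnit_iff_isUnit_det _).mpr (isUnit_iff_ne_zero.mpr hdetz)
  obtain ⟨hWzdet, hgz⟩ := hδ₁ z (by rw [hznorm]; exact hrδ₁)
  have hdec := decomp α P γ β lam z a hNP hPP hPα (isUnit_iff_ne_zero.mpr hdetz) hzne hWzdet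
  set gz := γ * ((1 - P) * ((z • (1 : Matrix (Fin t) (Fin t) ℂ) - α) * (1 - P) + P)⁻¹) * β
    with hgzdef
  have htrunc : (∑ k ∈ Finset.range a, ((z - lam)⁻¹) ^ (k + 1) • Cmat k)
      = (∑ k ∈ Finset.range d, ((z - lam)⁻¹) ^ (k + 1) • Cmat k)
        + ((z - lam)⁻¹) ^ (d + 1) • Cmat d := by
    rw [← Finset.sum_range_succ]
    refine (Finset.sum_subset (Finset.range_subset_range.mpr hda) ?_).symm
    intro x _ hx
    rw [hdmax x (by simpa [Finset.mem_range, Nat.lt_succ_iff, not_le] using hx), smul_zero]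
  have hE : γ * (z • (1 : Matrix (Fin t) (Fin t) ℂ) - α)⁻¹ * β
      = ((∑ k ∈ Finset.range d, ((z - lam)⁻¹) ^ (k + 1) • Cmat k)
        + ((z - lam)⁻¹) ^ (d + 1) • Cmat d) + gz := by
    rw [hdec, ← htrunc]
  set E := γ * (z • (1 : Matrix (Fin t) (Fin t) ℂ) - α)⁻¹ * β with hEdef
  set Sd := ∑ k ∈ Finset.range d, ((z - lam)⁻¹) ^ (k + 1) • Cmat k with hSddef
  have hmaincoef : ((z - lam)⁻¹) ^ (d + 1) • Cmat d = E - Sd - gz := by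
    rw [hE]; abel
  have hnormc : ‖(z - lam)⁻¹‖ = r⁻¹ := by rw [norm_inv, hznorm]
  have hrinv1 : 1 ≤ r⁻¹ := (one_le_inv₀ hr0).mpr hr1
  have hmain : ‖((z - lam)⁻¹) ^ (d + 1) • Cmat d‖ = r⁻¹ ^ (d + 1) * CD := by
    rw [norm_smul, norm_pow, hnormc, hCDdef]
  have hSdbound : ‖Sd‖ ≤ r⁻¹ ^ d * T := by
    calc ‖Sd‖ ≤ ∑ k ∈ Finset.range d, ‖((z - lam)⁻¹) ^ (k + 1) • Cmat k‖ :=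
          norm_sum_le _ _
      _ ≤ ∑ k ∈ Finset.range d, r⁻¹ ^ d * ‖Cmat k‖ := by
          refine Finset.sum_le_sum fun k hk => ?_
          rw [norm_smul, norm_pow, hnormc]
          have hkd : k + 1 ≤ d := Finset.mem_range.mp hk
          exact mul_le_mul_of_nonneg_right (pow_le_pow_right₀ hrinv1 hkd) (norm_nonneg _)
      _ = r⁻¹ ^ d * T := by rw [hTdef, Finset.mul_sum]
  have hEbound : r⁻¹ ^ (d + 1) * CD ≤ ‖E‖ + r⁻¹ ^ d * T + B := by
    have h1 : ‖E - Sd - gz‖ ≤ ‖E‖ + ‖Sd‖ + ‖gz‖ := by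
      calc ‖E - Sd - gz‖ ≤ ‖E - Sd‖ + ‖gz‖ := norm_sub_le _ _
        _ ≤ ‖E‖ + ‖Sd‖ + ‖gz‖ := by
            have := norm_sub_le E Sd
            linarith
    rw [← hmain, hmaincoef]
    have h2 := hgz
    linarith
  have hkey : M + B + r⁻¹ ^ d * T < r⁻¹ ^ (d + 1) * CD := by
    have e2 : T + M + B + 1 ≤ r⁻¹ * CD := by
      have h3 : r * (T + M + B + 1) < CD := by
        rw [lt_div_iff₀ (by linarith : (0:ℝ) < T + M + B + 1)] at hrCD
        exact hrCD
      have h4 : T + M + B + 1 < r⁻¹ * CD := by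
        rw [← div_eq_inv_mul, lt_div_iff₀ hr0]
        calc (T + M + B + 1) * r = r * (T + M + B + 1) := by ring
          _ < CD := h3
      linarith
    have e4 : 0 ≤ r⁻¹ * CD - T := by linarith
    have e5 : r⁻¹ * CD - T ≤ r⁻¹ ^ d * (r⁻¹ * CD - T) :=
      le_mul_of_one_le_left e4 (one_le_pow₀ hrinv1)
    have e6 : r⁻¹ ^ d * (r⁻¹ * CD - T) = r⁻¹ ^ (d + 1) * CD - r⁻¹ ^ d * T := by ring
    linarith
  have : M < ‖E‖ := by linarith
  exact ⟨z, by rw [hznorm]; exact hr0, by rw [hznorm]; exact hrε, hzunit, this⟩
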